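/- Decaying coefficients give summable sech-localizations: for ε, δ ∈ (0,1], if a : ℝ → ℝ satisfies |a(x)| + |a'(x)| ≤ δ(1+x²)^{-1} for all x, then ∫_ℝ ‖ψ_z a‖_{H¹(ℝ)} dz ≲ δ, where ψ_z(x) = sech((x-z)/6); the key pointwise step is ∫ |ψ_z(x) a(x)|² dx ≲ δ² ⟨z⟩^{-4}, obtained by partitioning sech² over unit annuli |x - z| ∈ [n, n+1). -/

import Mathlib

open MeasureTheory

/-- The translated weight `ψ_z(x) = sech((x-z)/6)`. -/
noncomputable def psiZ (z x : ℝ) : ℝ := (Real.cosh ((x - z) / 6))⁻¹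

/-- The `H¹(ℝ)` norm of a differentiable function `g` with derivative `g'`:
`(∫ |g|² + |g'|²)^{1/2}`. -/
noncomputable def h1NormOf (g g' : ℝ → ℝ) : ℝ :=
  Real.sqrt (∫ x : ℝ, (g x ^ 2 + g' x ^ 2))

/-!
Since `sech` decays exponentially, `ψ_z(x) ≲ ⟨x - z⟩⁻⁶`, and Peetre's inequality
`⟨x⟩⁻² ≤ 2 ⟨x - z⟩² ⟨z⟩⁻²` then gives `(ψ_z(x) ⟨x⟩⁻²)² ≲ ⟨x - z⟩⁻² ⟨z⟩⁻⁴`, whose `x`-integral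
is `π ⟨z⟩⁻⁴`. As `|ψ_z'| ≤ ψ_z`, the same bound controls `(ψ_z a)'`, so
`‖ψ_z a‖_{H¹} ≲ δ ⟨z⟩⁻²`, which is integrable in `z`.
-/

lemma inv_one_add_sq_le (x z : ℝ) :
    (1 + x ^ 2)⁻¹ ≤ 2 * (1 + (x - z) ^ 2) * (1 + z ^ 2)⁻¹ := by
  rw [← div_eq_mul_inv, inv_eq_one_div, div_le_div_iff₀ (by positivity) (by positivity)]
  nlinarith [sq_nonneg (2 * x - z), mul_nonneg (sq_nonneg (x - z)) (sq_nonneg x)]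

lemma one_add_sq_pow_three_le_mul_cosh (v : ℝ) : (1 + v ^ 2) ^ 3 ≤ 1600 * Real.cosh v := by
  have hexp (n : ℕ) : |v| ^ n / n.factorial ≤ Real.exp |v| :=
    Real.pow_div_factorial_le_exp _ (abs_nonneg v) n
  have h2 := hexp 2
  have h4 := hexp 4
  have h6 := hexp 6
  norm_num [Nat.factorial] at h2 h4 h6
  have hcosh : Real.exp |v| ≤ 2 * Real.cosh v := by
    rw [Real.cosh_eq]; linarith [Real.exp_abs_le v]
  rw [Even.pow_abs (by decide)] at h4 h6
  have hexpand : (1 + v ^ 2) ^ 3 = 1 + 3 * v ^ 2 + 3 * v ^ 4 + v ^ 6 := by ring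
  linarith [Real.one_le_exp (abs_nonneg v)]

lemma psiZ_pos (z x : ℝ) : 0 < psiZ z x := inv_pos.2 (Real.cosh_pos _)

lemma psiZ_le_one (z x : ℝ) : psiZ z x ≤ 1 := inv_le_one_of_one_le₀ (Real.one_le_cosh _)

lemma one_add_sq_pow_three_mul_psiZ_le (z x : ℝ) :
    (1 + (x - z) ^ 2) ^ 3 * psiZ z x ≤ 36 ^ 3 * 1600 := by
  set v := (x - z) / 6
  have hscale : 1 + (x - z) ^ 2 ≤ 36 * (1 + v ^ 2) := by
    simp only [v]; nlinarith
  calc (1 + (x - z) ^ 2) ^ 3 * psiZ z x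
      ≤ (36 * (1 + v ^ 2)) ^ 3 * (Real.cosh v)⁻¹ := by
        unfold psiZ
        gcongr
    _ ≤ 36 ^ 3 * (1600 * Real.cosh v) * (Real.cosh v)⁻¹ := by
        rw [mul_pow]
        gcongr
        exact one_add_sq_pow_three_le_mul_cosh v
    _ = 36 ^ 3 * 1600 := by field_simp

lemma sq_psiZ_mul_inv_one_add_sq_le (z x : ℝ) :
    (psiZ z x * (1 + x ^ 2)⁻¹) ^ 2
      ≤ 4 * (36 ^ 3 * 1600) * (1 + (x - z) ^ 2)⁻¹ * ((1 + z ^ 2) ^ 2)⁻¹ := by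
  set P := 1 + (x - z) ^ 2
  have hψ := psiZ_pos z x
  have hpeetre := inv_one_add_sq_le x z
  calc (psiZ z x * (1 + x ^ 2)⁻¹) ^ 2
      ≤ psiZ z x * (2 * P * (1 + z ^ 2)⁻¹) ^ 2 := by
        rw [mul_pow]
        gcongr
        nlinarith [psiZ_le_one z x]
    _ = 4 * (P ^ 3 * psiZ z x) * P⁻¹ * ((1 + z ^ 2) ^ 2)⁻¹ := by
        field_simp
        ring
    _ ≤ 4 * (36 ^ 3 * 1600) * P⁻¹ * ((1 + z ^ 2) ^ 2)⁻¹ := by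
        gcongr 4 * ?_ * _ * _
        exact one_add_sq_pow_three_mul_psiZ_le z x

lemma integral_le_of_le_sq_psiZ_mul {F : ℝ → ℝ} {z M : ℝ} (hF0 : ∀ x, 0 ≤ F x)
    (hF : ∀ x, F x ≤ (M * (psiZ z x * (1 + x ^ 2)⁻¹)) ^ 2) :
    ∫ x, F x ≤ 10 ^ 9 * M ^ 2 * ((1 + z ^ 2) ^ 2)⁻¹ := by
  set c := M ^ 2 * (4 * (36 ^ 3 * 1600)) * ((1 + z ^ 2) ^ 2)⁻¹
  have hdom (x : ℝ) : F x ≤ c * (1 + (x - z) ^ 2)⁻¹ := by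
    calc F x ≤ M ^ 2 * (psiZ z x * (1 + x ^ 2)⁻¹) ^ 2 := by rw [← mul_pow]; exact hF x
      _ ≤ M ^ 2 * (4 * (36 ^ 3 * 1600) * (1 + (x - z) ^ 2)⁻¹ * ((1 + z ^ 2) ^ 2)⁻¹) := by
          gcongr; exact sq_psiZ_mul_inv_one_add_sq_le z x
      _ = c * (1 + (x - z) ^ 2)⁻¹ := by ring
  have hint : Integrable (fun x : ℝ => c * (1 + (x - z) ^ 2)⁻¹) :=
    (integrable_inv_one_add_sq.comp_sub_right z).const_mul c
  calc ∫ x, F x ≤ ∫ x, c * (1 + (x - z) ^ 2)⁻¹ :=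
        integral_mono_of_nonneg (.of_forall hF0) hint (.of_forall hdom)
    _ = c * Real.pi := by
        rw [integral_const_mul, integral_sub_right_eq_self (fun x => (1 + x ^ 2)⁻¹) z,
          integral_univ_inv_one_add_sq]
    _ ≤ 10 ^ 9 * M ^ 2 * ((1 + z ^ 2) ^ 2)⁻¹ := by
        have : 0 ≤ M ^ 2 * ((1 + z ^ 2) ^ 2)⁻¹ := by positivity
        nlinarith [Real.pi_lt_d2]

lemma hasDerivAt_psiZ (z x : ℝ) :
    HasDerivAt (psiZ z) (-(Real.tanh ((x - z) / 6) / 6) * psiZ z x) x := by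
  have hlin : HasDerivAt (fun x : ℝ => (x - z) / 6) (1 / 6) x := by
    simpa using ((hasDerivAt_id x).sub_const z).div_const 6
  have hcosh : HasDerivAt (fun x => Real.cosh ((x - z) / 6))
      (Real.sinh ((x - z) / 6) * (1 / 6)) x := (Real.hasDerivAt_cosh _).comp x hlin
  refine (hcosh.inv (Real.cosh_pos _).ne').congr_deriv ?_
  rw [psiZ, Real.tanh_eq_sinh_div_cosh]
  field_simp

lemma abs_deriv_psiZ_mul_le {a a' : ℝ → ℝ} {z x : ℝ} (ha : HasDerivAt a (a' x) x) :
    |deriv (fun x => psiZ z x * a x) x| ≤ psiZ z x * (|a x| + |a' x|) := by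
  have hψ := psiZ_pos z x
  have htanh : |Real.tanh ((x - z) / 6) / 6| ≤ 1 := by
    rw [abs_div, abs_of_pos (by norm_num : (0 : ℝ) < 6)]
    linarith [Real.abs_tanh_lt_one ((x - z) / 6)]
  have hderiv : HasDerivAt (fun x => psiZ z x * a x) _ x := (hasDerivAt_psiZ z x).mul ha
  rw [hderiv.deriv]
  calc |-(Real.tanh ((x - z) / 6) / 6) * psiZ z x * a x + psiZ z x * a' x|
      ≤ |Real.tanh ((x - z) / 6) / 6| * psiZ z x * |a x| + psiZ z x * |a' x| := by
        refine (abs_add_le _ _).trans ?_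
        rw [abs_mul, abs_mul, abs_mul, abs_neg, abs_of_pos hψ]
    _ ≤ 1 * psiZ z x * |a x| + psiZ z x * |a' x| := by gcongr
    _ = psiZ z x * (|a x| + |a' x|) := by ring

lemma h1NormOf_psiZ_mul_le {a a' : ℝ → ℝ} {M : ℝ} (ha : ∀ x, HasDerivAt a (a' x) x)
    (hbound : ∀ x, |a x| + |a' x| ≤ M * (1 + x ^ 2)⁻¹) (z : ℝ) :
    h1NormOf (fun x => psiZ z x * a x) (fun x => deriv (fun x => psiZ z x * a x) x)
      ≤ 10 ^ 5 * M * (1 + z ^ 2)⁻¹ := by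
  have hM : 0 ≤ M := by simpa using (add_nonneg (abs_nonneg _) (abs_nonneg _)).trans (hbound 0)
  have hdom (x : ℝ) : psiZ z x * (|a x| + |a' x|) ≤ M * (psiZ z x * (1 + x ^ 2)⁻¹) := by
    calc psiZ z x * (|a x| + |a' x|) ≤ psiZ z x * (M * (1 + x ^ 2)⁻¹) :=
          mul_le_mul_of_nonneg_left (hbound x) (psiZ_pos z x).le
      _ = M * (psiZ z x * (1 + x ^ 2)⁻¹) := by ring
  have hint : ∫ x, ((psiZ z x * a x) ^ 2 + deriv (fun x => psiZ z x * a x) x ^ 2)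
      ≤ 10 ^ 9 * (2 * M) ^ 2 * ((1 + z ^ 2) ^ 2)⁻¹ := by
    refine integral_le_of_le_sq_psiZ_mul (fun x => by positivity) fun x => ?_
    set B := M * (psiZ z x * (1 + x ^ 2)⁻¹)
    have hval : |psiZ z x * a x| ≤ B := by
      refine le_trans ?_ (hdom x)
      rw [abs_mul, abs_of_pos (psiZ_pos z x)]
      exact mul_le_mul_of_nonneg_left (le_add_of_nonneg_right (abs_nonneg _)) (psiZ_pos z x).le
    have hder := (abs_deriv_psiZ_mul_le (z := z) (ha x)).trans (hdom x)
    calc (psiZ z x * a x) ^ 2 + deriv (fun x => psiZ z x * a x) x ^ 2 ≤ B ^ 2 + B ^ 2 :=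
          add_le_add (sq_le_sq' (abs_le.1 hval).1 (abs_le.1 hval).2)
            (sq_le_sq' (abs_le.1 hder).1 (abs_le.1 hder).2)
      _ ≤ (2 * M * (psiZ z x * (1 + x ^ 2)⁻¹)) ^ 2 := by nlinarith [sq_nonneg B]
  rw [h1NormOf, Real.sqrt_le_left (by positivity)]
  calc _ ≤ 10 ^ 9 * (2 * M) ^ 2 * ((1 + z ^ 2) ^ 2)⁻¹ := hint
    _ = 4 * 10 ^ 9 * (M ^ 2 * ((1 + z ^ 2) ^ 2)⁻¹) := by ring
    _ ≤ 10 ^ 10 * (M ^ 2 * ((1 + z ^ 2) ^ 2)⁻¹) := by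
        gcongr ?_ * _
        norm_num
    _ = (10 ^ 5 * M * (1 + z ^ 2)⁻¹) ^ 2 := by rw [mul_pow, mul_pow, inv_pow]; ring

/-- there is a constant `C` such that for every `δ ∈ (0,1]` and every `a`
with `|a(x)| + |a'(x)| ≤ δ (1+x²)⁻¹`, one has the pointwise step
`∫ |ψ_z a|² dx ≤ C δ² ⟨z⟩⁻⁴` and the conclusion `∫ ‖ψ_z a‖_{H¹} dz ≤ C δ`. -/
theorem stmt16 :
    ∃ C > 0, ∀ δ : ℝ, 0 < δ → δ ≤ 1 → ∀ a a' : ℝ → ℝ,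
      (∀ x, HasDerivAt a (a' x) x) →
      (∀ x, |a x| + |a' x| ≤ δ * (1 + x ^ 2)⁻¹) →
      (∀ z : ℝ, (∫ x : ℝ, (psiZ z x * a x) ^ 2) ≤ C * δ ^ 2 * ((1 + z ^ 2) ^ (2:ℕ))⁻¹) ∧
      (∫ z : ℝ, h1NormOf (fun x => psiZ z x * a x)
          (fun x => deriv (fun x => psiZ z x * a x) x)) ≤ C * δ := by
  refine ⟨10 ^ 9, by norm_num, fun δ hδ _ a a' ha hbound => ⟨fun z => ?_, ?_⟩⟩
  · refine integral_le_of_le_sq_psiZ_mul (fun x => sq_nonneg _) fun x => ?_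
    have hψ := psiZ_pos z x
    have haδ : |a x| ≤ δ * (1 + x ^ 2)⁻¹ := (le_add_of_nonneg_right (abs_nonneg _)).trans (hbound x)
    rw [← sq_abs, abs_mul, abs_of_pos hψ]
    gcongr ?_ ^ 2
    nlinarith [mul_le_mul_of_nonneg_left haδ hψ.le]
  · have hint : Integrable (fun z : ℝ => 10 ^ 5 * δ * (1 + z ^ 2)⁻¹) :=
      integrable_inv_one_add_sq.const_mul _
    calc (∫ z, h1NormOf (fun x => psiZ z x * a x) (fun x => deriv (fun x => psiZ z x * a x) x))
        ≤ ∫ z : ℝ, 10 ^ 5 * δ * (1 + z ^ 2)⁻¹ :=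
          integral_mono_of_nonneg (.of_forall fun z => Real.sqrt_nonneg _) hint
            (.of_forall (h1NormOf_psiZ_mul_le ha hbound))
      _ = 10 ^ 5 * δ * Real.pi := by rw [integral_const_mul, integral_univ_inv_one_add_sq]
      _ ≤ 10 ^ 9 * δ := by nlinarith [Real.pi_le_four]
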